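/- (Calmness of the proximal point update) Let μ, ν be Borel probability measures on Z and W ≥ 0 a constant such that |∫ g dμ − ∫ g dν| ≤ W for every 1-Lipschitz g : Z → ℝ. Suppose f_μ is α-strongly convex for some α > 0, fix x ∈ E and η > 0, let y_μ be a minimizer over E of y ↦ f_μ(y) + r(y) + (1/(2η))‖y − x‖², and let y_ν be a minimizer over E of y ↦ f_ν(y) + r(y) + (1/(2η))‖y − x‖². Then ‖y_μ − y_ν‖ ≤ (ηβ/(1 + ηα))·W. -/

import Mathlib

/-!
The function `Φ(y) = f_μ(y) + r(y) + ‖y - x‖² / (2η)` is `κ`-strongly convex with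
`κ = α + 1/η`, and `y_μ` minimizes `Φ` while `y_ν` minimizes `Φ + h` with `h = f_ν - f_μ`.
Testing the dual bound on the `β‖v‖`-Lipschitz function `z ↦ ⟪v, ∇ℓ(y, z)⟫`, where
`v = ∇f_μ(y) - ∇f_ν(y)`, gives `‖∇h‖ ≤ βW`, so `h` is `L`-Lipschitz with `L = βW`.
Comparing each minimizer with the points of the segment towards the other one and letting these
points tend to the minimizer gives two quadratic growth bounds whose sum is
`κ ‖y_μ - y_ν‖² ≤ L ‖y_μ - y_ν‖`.
-/

open MeasureTheory Set Filter Topology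
open scoped NNReal

lemma le_of_forall_mem_Ioo_one_sub_mul_le {a b : ℝ}
    (h : ∀ t ∈ Ioo (0 : ℝ) 1, (1 - t) * a ≤ b) : a ≤ b := by
  have hlim : Tendsto (fun t : ℝ => (1 - t) * a) (𝓝[>] 0) (𝓝 a) := by
    have : Tendsto (fun t : ℝ => (1 - t) * a) (𝓝 0) (𝓝 ((1 - 0) * a)) :=
      ((continuous_const.sub continuous_id).mul continuous_const).tendsto 0
    simpa using this.mono_left nhdsWithin_le_nhds
  exact le_of_tendsto hlim (eventually_of_mem (Ioo_mem_nhdsGT one_pos) h)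

section StrongConvexity

variable {E : Type*} [NormedAddCommGroup E]

lemma StrongConvexOn.add [NormedSpace ℝ E] {s : Set E} {m n : ℝ} {f g : E → ℝ}
    (hf : StrongConvexOn s m f) (hg : StrongConvexOn s n g) :
    StrongConvexOn s (m + n) (f + g) := by
  refine (UniformConvexOn.add hf hg).mono fun r => le_of_eq ?_
  simp only [Pi.add_apply]
  ring

lemma strongConvexOn_mul_sq_norm_sub [InnerProductSpace ℝ E] (c : ℝ) (x : E) :
    StrongConvexOn univ (2 * c) fun y => c * ‖y - x‖ ^ 2 := by
  rw [strongConvexOn_iff_convex]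
  have haffine : (fun y => c * ‖y - x‖ ^ 2 - 2 * c / 2 * ‖y‖ ^ 2)
      = fun y => ((-2 * c) • innerSL ℝ x) y + c * ‖x‖ ^ 2 := by
    ext y
    simp only [norm_sub_sq_real, smul_apply, innerSL_apply_apply,
      smul_eq_mul, real_inner_comm x y]
    ring
  rw [haffine]
  exact (((-2 * c) • innerSL ℝ x).toLinearMap.convexOn convex_univ).add_const _

variable [InnerProductSpace ℝ E] {m : ℝ} {L : ℝ≥0} {Φ h : E → ℝ} {y₀ y₁ y₂ : E}

lemma StrongConvexOn.quadratic_growth_of_isMinOn_add (hΦ : StrongConvexOn univ m Φ)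
    (hh : LipschitzWith L h) (hmin : IsMinOn (Φ + h) univ y₀) (y : E) :
    m / 2 * ‖y - y₀‖ ^ 2 + Φ y₀ ≤ Φ y + L * ‖y - y₀‖ := by
  set D := ‖y - y₀‖
  suffices ∀ t ∈ Ioo (0 : ℝ) 1, (1 - t) * (m / 2 * D ^ 2) ≤ Φ y - Φ y₀ + L * D by
    linarith [le_of_forall_mem_Ioo_one_sub_mul_le this]
  rintro t ⟨ht₀, ht₁⟩
  set c := t • y + (1 - t) • y₀
  have hconv : Φ c ≤ t * Φ y + (1 - t) * Φ y₀ - t * (1 - t) * (m / 2 * D ^ 2) :=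
    hΦ.2 (mem_univ y) (mem_univ y₀) ht₀.le (by linarith) (by ring)
  have hle : Φ y₀ + h y₀ ≤ Φ c + h c := isMinOn_univ_iff.mp hmin c
  have hdist : ‖c - y₀‖ = t * D := by
    rw [show c - y₀ = t • (y - y₀) by module, norm_smul, Real.norm_of_nonneg ht₀.le]
  have hlip : h c - h y₀ ≤ L * (t * D) := by
    rw [← hdist, ← dist_eq_norm]
    exact (le_abs_self _).trans (hh.dist_le_mul c y₀)
  have hscaled : t * ((1 - t) * (m / 2 * D ^ 2)) ≤ t * (Φ y - Φ y₀ + L * D) := by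
    nlinarith
  exact le_of_mul_le_mul_left hscaled ht₀

lemma StrongConvexOn.quadratic_growth_of_isMinOn (hΦ : StrongConvexOn univ m Φ)
    (hmin : IsMinOn Φ univ y₀) (y : E) : m / 2 * ‖y - y₀‖ ^ 2 + Φ y₀ ≤ Φ y := by
  simpa using hΦ.quadratic_growth_of_isMinOn_add (LipschitzWith.const (0 : ℝ))
    (by rwa [← Pi.zero_def, add_zero]) y

lemma StrongConvexOn.norm_sub_le_of_isMinOn_of_isMinOn_add (hΦ : StrongConvexOn univ m Φ)
    (hm : 0 < m) (hh : LipschitzWith L h) (h₁ : IsMinOn Φ univ y₁)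
    (h₂ : IsMinOn (Φ + h) univ y₂) : ‖y₁ - y₂‖ ≤ L / m := by
  have hgrowth₁ := hΦ.quadratic_growth_of_isMinOn h₁ y₂
  have hgrowth₂ := hΦ.quadratic_growth_of_isMinOn_add hh h₂ y₁
  rw [norm_sub_rev] at hgrowth₁
  have hsq : m * ‖y₁ - y₂‖ ^ 2 ≤ L * ‖y₁ - y₂‖ := by linarith
  rw [le_div_iff₀ hm]
  rcases (norm_nonneg (y₁ - y₂)).eq_or_lt with hzero | hpos
  · rw [← hzero, zero_mul]; exact L.2
  · nlinarith

end StrongConvexity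

section Gradient

variable {E : Type*} [NormedAddCommGroup E] [InnerProductSpace ℝ E] [CompleteSpace E]

lemma HasGradientAt.sub {f g : E → ℝ} {f' g' x : E} (hf : HasGradientAt f f' x)
    (hg : HasGradientAt g g' x) : HasGradientAt (fun y => f y - g y) (f' - g') x := by
  rw [hasGradientAt_iff_hasFDerivAt, map_sub]
  exact hf.hasFDerivAt.sub hg.hasFDerivAt

lemma lipschitzWith_of_hasGradientAt_of_norm_le {f : E → ℝ} {f' : E → E} {C : ℝ}
    (hf : ∀ x, HasGradientAt f (f' x) x) (bound : ∀ x, ‖f' x‖ ≤ C) :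
    LipschitzWith C.toNNReal f := by
  rw [← lipschitzOnWith_univ]
  refine convex_univ.lipschitzOnWith_of_nnnorm_hasFDerivWithin_le
    (fun x _ => (hf x).hasFDerivAt.hasFDerivWithinAt) fun x _ => ?_
  rw [← NNReal.coe_le_coe, coe_nnnorm, LinearIsometryEquiv.norm_map]
  exact (bound x).trans (Real.le_coe_toNNReal C)

end Gradient

section DualBound

variable {Z : Type*} [MetricSpace Z] [MeasurableSpace Z] {μ ν : Measure Z} {W : ℝ}

lemma nonneg_of_forall_lipschitzWith_abs_integral_sub_le
    (hdual : ∀ g : Z → ℝ, LipschitzWith 1 g → |(∫ z, g z ∂μ) - ∫ z, g z ∂ν| ≤ W) : 0 ≤ W := by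
  simpa using hdual (fun _ => 0) ((LipschitzWith.const 0).weaken zero_le_one)

lemma abs_integral_sub_integral_le_of_lipschitzWith [IsProbabilityMeasure μ]
    [IsProbabilityMeasure ν]
    (hdual : ∀ g : Z → ℝ, LipschitzWith 1 g → |(∫ z, g z ∂μ) - ∫ z, g z ∂ν| ≤ W)
    {K : ℝ≥0} {g : Z → ℝ} (hg : LipschitzWith K g) :
    |(∫ z, g z ∂μ) - ∫ z, g z ∂ν| ≤ K * W := by
  rcases eq_zero_or_pos K with rfl | hK
  · obtain ⟨z₀⟩ := nonempty_of_isProbabilityMeasure μ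
    have hconst : g = fun _ => g z₀ := funext fun z =>
      dist_le_zero.mp (by simpa only [NNReal.coe_zero, zero_mul] using hg.dist_le_mul z z₀)
    rw [hconst]
    simp
  · have hK' : 0 < (K : ℝ) := hK
    have hscaled : LipschitzWith 1 fun z => (K : ℝ)⁻¹ * g z :=
      LipschitzWith.of_dist_le_mul fun z z' => by
        rw [Real.dist_eq, ← mul_sub, abs_mul, abs_of_pos (inv_pos.2 hK'), NNReal.coe_one,
          one_mul, inv_mul_le_iff₀ hK', ← Real.dist_eq]
        exact hg.dist_le_mul z z'
    have := hdual _ hscaled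
    rwa [integral_const_mul, integral_const_mul, ← mul_sub, abs_mul,
      abs_of_pos (inv_pos.2 hK'), inv_mul_le_iff₀ hK'] at this

lemma norm_integral_sub_integral_le_of_lipschitzWith {E : Type*} [NormedAddCommGroup E]
    [InnerProductSpace ℝ E] [CompleteSpace E] [IsProbabilityMeasure μ] [IsProbabilityMeasure ν]
    (hdual : ∀ g : Z → ℝ, LipschitzWith 1 g → |(∫ z, g z ∂μ) - ∫ z, g z ∂ν| ≤ W)
    {K : ℝ≥0} {G : Z → E} (hG : LipschitzWith K G) (hμ : Integrable G μ) (hν : Integrable G ν) :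
    ‖(∫ z, G z ∂μ) - ∫ z, G z ∂ν‖ ≤ K * W := by
  set v := (∫ z, G z ∂μ) - ∫ z, G z ∂ν
  have hW : 0 ≤ W := nonneg_of_forall_lipschitzWith_abs_integral_sub_le hdual
  have hg : LipschitzWith (‖v‖₊ * K) fun z => inner ℝ v (G z) := by
    have hnorm : ‖innerSL ℝ v‖₊ = ‖v‖₊ := Subtype.ext (innerSL_apply_norm ℝ v)
    exact hnorm ▸ (innerSL ℝ v).lipschitz.comp hG
  have hsq : ‖v‖ ^ 2 = (∫ z, inner ℝ v (G z) ∂μ) - ∫ z, inner ℝ v (G z) ∂ν := by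
    rw [integral_inner hμ, integral_inner hν, ← inner_sub_right, real_inner_self_eq_norm_sq]
  have hbound := abs_integral_sub_integral_le_of_lipschitzWith hdual hg
  rw [← hsq, abs_of_nonneg (by positivity), NNReal.coe_mul, coe_nnnorm, mul_assoc] at hbound
  rcases (norm_nonneg v).eq_or_lt with hzero | hpos
  · rw [← hzero]; positivity
  · nlinarith

end DualBound

theorem calmness_proximal_point_general
    {E : Type*} [NormedAddCommGroup E] [InnerProductSpace ℝ E] [FiniteDimensional ℝ E]
    {Z : Type*} [MetricSpace Z] [MeasurableSpace Z]
    (ℓ : E → Z → ℝ) (G : E → Z → E) (β : ℝ) (hβ : 0 ≤ β)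
    (hlip : ∀ (x : E) (z z' : Z), ‖G x z - G x z'‖ ≤ β * dist z z')
    (μ ν : Measure Z) [IsProbabilityMeasure μ] [IsProbabilityMeasure ν]
    (hintGμ : ∀ x : E, Integrable (fun z => G x z) μ)
    (hintGν : ∀ x : E, Integrable (fun z => G x z) ν)
    (hfμ : ∀ x : E, HasGradientAt (fun x' => ∫ z, ℓ x' z ∂μ) (∫ z, G x z ∂μ) x)
    (hfν : ∀ x : E, HasGradientAt (fun x' => ∫ z, ℓ x' z ∂ν) (∫ z, G x z ∂ν) x)
    (r : E → ℝ) (hr : ConvexOn ℝ univ r)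
    (α : ℝ) (hα : 0 < α)
    (hsc : ConvexOn ℝ univ (fun x => (∫ z, ℓ x z ∂μ) - α / 2 * ‖x‖ ^ 2))
    (W : ℝ)
    (hdual : ∀ g : Z → ℝ, LipschitzWith 1 g → |(∫ z, g z ∂μ) - ∫ z, g z ∂ν| ≤ W)
    (x : E) (η : ℝ) (hη : 0 < η)
    (yμ yν : E)
    (hyμ : ∀ y : E, (∫ z, ℓ yμ z ∂μ) + r yμ + 1 / (2 * η) * ‖yμ - x‖ ^ 2
      ≤ (∫ z, ℓ y z ∂μ) + r y + 1 / (2 * η) * ‖y - x‖ ^ 2)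
    (hyν : ∀ y : E, (∫ z, ℓ yν z ∂ν) + r yν + 1 / (2 * η) * ‖yν - x‖ ^ 2
      ≤ (∫ z, ℓ y z ∂ν) + r y + 1 / (2 * η) * ‖y - x‖ ^ 2) :
    ‖yμ - yν‖ ≤ (η * β / (1 + η * α)) * W := by
  set Φ : E → ℝ := fun y => (∫ z, ℓ y z ∂μ) + r y + 1 / (2 * η) * ‖y - x‖ ^ 2
  set h : E → ℝ := fun y => (∫ z, ℓ y z ∂ν) - ∫ z, ℓ y z ∂μ
  have hΦ : StrongConvexOn univ (α + 1 / η) Φ := by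
    have := ((strongConvexOn_iff_convex.mpr hsc).add (strongConvexOn_zero.mpr hr)).add
      (strongConvexOn_mul_sq_norm_sub (1 / (2 * η)) x)
    rwa [add_zero, show 2 * (1 / (2 * η)) = 1 / η by field_simp] at this
  have hW : 0 ≤ W := nonneg_of_forall_lipschitzWith_abs_integral_sub_le hdual
  have hh : LipschitzWith (β * W).toNNReal h := by
    refine lipschitzWith_of_hasGradientAt_of_norm_le (fun y => (hfν y).sub (hfμ y)) fun y => ?_
    rw [norm_sub_rev, ← Real.coe_toNNReal β hβ]
    exact norm_integral_sub_integral_le_of_lipschitzWith hdual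
      (LipschitzWith.of_dist_le' fun z z' => by rw [dist_eq_norm]; exact hlip y z z')
      (hintGμ y) (hintGν y)
  have hminμ : IsMinOn Φ univ yμ := isMinOn_univ_iff.mpr hyμ
  have hminν : IsMinOn (Φ + h) univ yν := isMinOn_univ_iff.mpr fun y => by
    simp only [Pi.add_apply, Φ, h]
    linarith [hyν y]
  calc ‖yμ - yν‖ ≤ (β * W).toNNReal / (α + 1 / η) :=
        hΦ.norm_sub_le_of_isMinOn_of_isMinOn_add (by positivity) hh hminμ hminν
    _ = η * β / (1 + η * α) * W := by
        rw [Real.coe_toNNReal _ (mul_nonneg hβ hW)]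
        field_simp
        ring

/-- **Calmness of the proximal point update.** If `f_μ` is `α`-strongly convex, `r` is convex,
and `W` dominates `W₁(μ,ν)` in the dual sense, then for any `x` and `η > 0`, minimizers of
`f_μ + r + (1/(2η))‖·−x‖²` and `f_ν + r + (1/(2η))‖·−x‖²` satisfy
`‖y_μ − y_ν‖ ≤ (ηβ/(1+ηα))·W`. -/
theorem calmness_proximal_point
    {E : Type*} [NormedAddCommGroup E] [InnerProductSpace ℝ E] [FiniteDimensional ℝ E]
    {Z : Type*} [MetricSpace Z] [MeasurableSpace Z] [BorelSpace Z]
    (ℓ : E → Z → ℝ) (G : E → Z → E) (β : ℝ) (hβ : 0 ≤ β)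
    (hgrad : ∀ (x : E) (z : Z), HasGradientAt (fun x' => ℓ x' z) (G x z) x)
    (hlip : ∀ (x : E) (z z' : Z), ‖G x z - G x z'‖ ≤ β * dist z z')
    (μ ν : Measure Z) [IsProbabilityMeasure μ] [IsProbabilityMeasure ν]
    (hintμ : ∀ x : E, Integrable (fun z => ℓ x z) μ)
    (hintν : ∀ x : E, Integrable (fun z => ℓ x z) ν)
    (hintGμ : ∀ x : E, Integrable (fun z => G x z) μ)
    (hintGν : ∀ x : E, Integrable (fun z => G x z) ν)
    (hfμ : ∀ x : E, HasGradientAt (fun x' => ∫ z, ℓ x' z ∂μ) (∫ z, G x z ∂μ) x)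
    (hfν : ∀ x : E, HasGradientAt (fun x' => ∫ z, ℓ x' z ∂ν) (∫ z, G x z ∂ν) x)
    (r : E → ℝ) (hr : ConvexOn ℝ univ r)
    (α : ℝ) (hα : 0 < α)
    (hsc : ConvexOn ℝ univ (fun x => (∫ z, ℓ x z ∂μ) - α / 2 * ‖x‖ ^ 2))
    (W : ℝ) (hW : 0 ≤ W)
    (hdual : ∀ g : Z → ℝ, LipschitzWith 1 g → |(∫ z, g z ∂μ) - ∫ z, g z ∂ν| ≤ W)
    (x : E) (η : ℝ) (hη : 0 < η)
    (yμ yν : E)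
    (hyμ : ∀ y : E, (∫ z, ℓ yμ z ∂μ) + r yμ + 1 / (2 * η) * ‖yμ - x‖ ^ 2
      ≤ (∫ z, ℓ y z ∂μ) + r y + 1 / (2 * η) * ‖y - x‖ ^ 2)
    (hyν : ∀ y : E, (∫ z, ℓ yν z ∂ν) + r yν + 1 / (2 * η) * ‖yν - x‖ ^ 2
      ≤ (∫ z, ℓ y z ∂ν) + r y + 1 / (2 * η) * ‖y - x‖ ^ 2) :
    ‖yμ - yν‖ ≤ (η * β / (1 + η * α)) * W :=
  calmness_proximal_point_general ℓ G β hβ hlip μ ν hintGμ hintGν hfμ hfν r hr α hα hsc W hdual x η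
    hη yμ yν hyμ hyν
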